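/- Let n ≥ 2 and let G = G_1 × ⋯ × G_n be a direct product of finite groups such that every maximal subgroup M of G splits as a direct product M = M_1 × ⋯ × M_n with M_i ≤ G_i for every i. If each G_i satisfies the (μ,λ)-property, then G satisfies the (μ,λ)-property. -/

import Mathlib

open Classical in
/-- The Möbius function of a finite partial order with a top element:
`mob ⊤ = 1` and `mob x = -∑_{x < y ≤ ⊤} mob y` for `x ≠ ⊤`. -/
noncomputable def mob {α : Type*} [PartialOrder α] [OrderTop α] [Finite α] (x : α) : ℤ :=
  if x = ⊤ then 1
  else - ∑ y ∈ (Set.toFinite {y : α | x < y}).toFinset.attach, mob y.1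
termination_by (Set.toFinite {y : α | x < y}).toFinset.card
decreasing_by
  have hy : x < y.1 := by
    have h2 := y.2
    rwa [Set.Finite.mem_toFinset] at h2
  refine Finset.card_lt_card ?_
  rw [Finset.ssubset_iff_of_subset]
  · exact ⟨y.1, by rwa [Set.Finite.mem_toFinset], by simp [Set.Finite.mem_toFinset]⟩
  · intro z hz
    rw [Set.Finite.mem_toFinset] at hz ⊢
    exact hy.trans hz

section C

variable (G : Type*) [Group G]

instance subgroupFinite [Finite G] : Finite (Subgroup G) :=
  Finite.of_injective (fun H => (H : Set G)) SetLike.coe_injective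

/-- Type synonym for `Subgroup G`, endowed with the preorder `H ≼ K` iff
`H ≤ gKg⁻¹` for some `g : G`. -/
def CSub := Subgroup G

variable {G}

/-- Conversion from `Subgroup G` to the type synonym `CSub G`. -/
def CSub.mk (H : Subgroup G) : CSub G := H

/-- Conversion from the type synonym `CSub G` to `Subgroup G`. -/
def CSub.toSubgroup (H : CSub G) : Subgroup G := H

variable (G)

instance : Preorder (CSub G) where
  le H K := ∃ g : G, H.toSubgroup ≤ K.toSubgroup.map (MulAut.conj g).toMonoidHom
  le_refl H := ⟨1, by
    simp only [map_one]
    rw [show MulEquiv.toMonoidHom (1 : MulAut G) = MonoidHom.id G from rfl, Subgroup.map_id]⟩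
  le_trans H K L := by
    rintro ⟨g, hg⟩ ⟨h, hh⟩
    refine ⟨g * h, hg.trans ?_⟩
    have hm := Subgroup.map_mono (f := (MulAut.conj g).toMonoidHom) hh
    rw [Subgroup.map_map] at hm
    refine hm.trans (le_of_eq ?_)
    congr 1
    ext x
    simp [mul_assoc]

instance [Finite G] : Finite (CSub G) := subgroupFinite G

/-- The poset of conjugacy classes of subgroups of `G`: for a finite group this is
the quotient of subgroups by conjugacy, with `[H] ≤ [K]` iff `H ≤ gKg⁻¹` for some `g ∈ G`. -/
abbrev ConjClassSub := Antisymmetrization (CSub G) (· ≤ ·)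

/-- The conjugacy class of a subgroup, as an element of `ConjClassSub G`. -/
def conjClassOf (H : Subgroup G) : ConjClassSub G :=
  toAntisymmetrization (α := CSub G) (· ≤ ·) (CSub.mk H)

instance : OrderTop (ConjClassSub G) where
  top := conjClassOf G ⊤
  le_top c := by
    induction c using Quotient.ind with
    | _ H =>
      show toAntisymmetrization (α := CSub G) (· ≤ ·) H ≤
        toAntisymmetrization (α := CSub G) (· ≤ ·) (CSub.mk ⊤)
      rw [toAntisymmetrization_le_toAntisymmetrization_iff]
      refine ⟨1, ?_⟩
      show H.toSubgroup ≤ Subgroup.map (MulAut.conj (1:G)).toMonoidHom (⊤ : Subgroup G)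
      rw [Subgroup.map_top_of_surjective _ (MulAut.conj (1:G)).surjective]
      exact le_top

instance [Finite G] : Finite (ConjClassSub G) := Quotient.finite _

variable {G}

/-- The Möbius function `μ_G` on the subgroup lattice of the finite group `G`. -/
noncomputable def muSub [Finite G] (H : Subgroup G) : ℤ := mob H

/-- The Möbius function `λ_G` on the poset of conjugacy classes of subgroups of the
finite group `G`, evaluated at the class of `H`. -/
noncomputable def lamSub [Finite G] (H : Subgroup G) : ℤ :=
  mob (conjClassOf G H)

/-- `G` satisfies the (μ,λ)-property if `μ_G(H) = [N_{G'}(H) : G' ∩ H] · λ_G(H)`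
for every subgroup `H ≤ G`, where `G' = [G,G]` and `N_{G'}(H) = N_G(H) ∩ G'`. -/
def MuLambdaProperty (G : Type*) [Group G] [Finite G] : Prop :=
  ∀ H : Subgroup G,
    muSub H =
      ((commutator G ⊓ H).relIndex (Subgroup.normalizer (H : Set G) ⊓ commutator G) : ℤ) * lamSub H

/-- `MaxInt G` consists of `G` itself (the subgroup `⊤`) together with all
intersections of nonempty families of maximal subgroups of `G`. -/
def MaxInt (G : Type*) [Group G] : Set (Subgroup G) :=
  {H | H = ⊤ ∨ ∃ S : Set (Subgroup G), S.Nonempty ∧ (∀ M ∈ S, IsCoatom M) ∧ H = sInf S}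

end C

instance {n R : Type*} [DecidableEq n] [Fintype n] [CommRing R] [Finite R] :
    Finite (Matrix.SpecialLinearGroup n R) :=
  Finite.of_injective (fun A => (A : Matrix n n R)) Subtype.coe_injective

open scoped MatrixGroups

/-!
The meet of the maximal subgroups containing `H` is a closure operator on subgroups; it commutes
with conjugation, so it also induces one on conjugacy classes of subgroups, and in both cases only
`⊤` has closure `⊤`. A Möbius function vanishes at every element that is not closed under such a
closure operator, so `μ` and `λ` are supported on (classes of) closed subgroups, which by
hypothesis are products `∏ Kᵢ`, an intersection of products being a product. Since a Möbius value
only depends on the elements above, the order embedding `(Kᵢ) ↦ ∏ Kᵢ` of `∏ L(Gᵢ)` (resp.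
`∏ 𝒞(Gᵢ)`), whose image contains `⊤` and the support, transports the Möbius function of the product
poset, which is multiplicative. The index is multiplicative as well, because `G' = ∏ Gᵢ'` and
`N(∏ Kᵢ) = ∏ N(Kᵢ)`.
-/

section Mobius

variable {α : Type*} [PartialOrder α]

open Classical in
theorem sum_le_eq_add_sum_lt [Fintype α] {M : Type*} [AddCommMonoid M] (f : α → M) (x : α) :
    ∑ y with x ≤ y, f y = f x + ∑ y with x < y, f y := by
  rw [← Finset.sum_insert (by simp)]
  congr 1
  ext y
  simp [le_iff_eq_or_lt, eq_comm]

variable [OrderTop α]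

theorem mob_top [Finite α] : mob (⊤ : α) = 1 := by
  rw [mob, if_pos rfl]

open Classical in
theorem sum_mob_le_eq_zero [Fintype α] {x : α} (hx : x ≠ ⊤) : ∑ y with x ≤ y, mob y = 0 := by
  have hIoi : (Set.toFinite {y | x < y}).toFinset = ({y | x < y} : Finset α) := by
    ext y
    simp
  rw [sum_le_eq_add_sum_lt, mob, if_neg hx, Finset.sum_attach _ mob, hIoi, neg_add_cancel]

open Classical in
theorem eq_mob_of_sum_le_eq_zero [Fintype α] {f : α → ℤ} (htop : f ⊤ = 1)
    (hsum : ∀ x ≠ ⊤, ∑ y with x ≤ y, f y = 0) (x : α) : f x = mob x := by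
  induction x using WellFoundedGT.induction with
  | _ x ih =>
  by_cases hx : x = ⊤
  · rw [hx, htop, mob_top]
  have hgt : ∑ y with x < y, f y = ∑ y with x < y, mob y :=
    Finset.sum_congr rfl fun y hy => ih y (Finset.mem_filter.1 hy).2
  have hf := hsum x hx
  have hmob := sum_mob_le_eq_zero hx
  rw [sum_le_eq_add_sum_lt] at hf hmob
  linarith

theorem mob_pi {ι : Type*} [Fintype ι] {Q : ι → Type*} [∀ i, PartialOrder (Q i)]
    [∀ i, OrderTop (Q i)] [∀ i, Finite (Q i)] (q : ∀ i, Q i) : mob q = ∏ i, mob (q i) := by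
  classical
  have : ∀ i, Fintype (Q i) := fun i => Fintype.ofFinite (Q i)
  refine (eq_mob_of_sum_le_eq_zero (f := fun q => ∏ i, mob (q i))
    (Finset.prod_eq_one fun i _ => mob_top) (fun q hq => ?_) q).symm
  obtain ⟨i, hi⟩ : ∃ i, q i ≠ ⊤ := by
    by_contra! h
    exact hq (funext h)
  have hIci : ({q' | q ≤ q'} : Finset (∀ i, Q i)) = Fintype.piFinset fun i => {y | q i ≤ y} := by
    ext q'
    simp [Pi.le_def]
  rw [hIci, ← Finset.prod_univ_sum]
  exact Finset.prod_eq_zero (Finset.mem_univ i) (sum_mob_le_eq_zero hi)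

theorem mob_orderEmbedding {β : Type*} [PartialOrder β] [OrderTop β] [Finite α] [Finite β]
    (e : α ↪o β) (htop : e ⊤ = ⊤) (hsupp : ∀ y, mob y ≠ 0 → y ∈ Set.range e) (x : α) :
    mob (e x) = mob x := by
  classical
  have := Fintype.ofFinite α
  have := Fintype.ofFinite β
  refine eq_mob_of_sum_le_eq_zero (f := fun x => mob (e x)) (by rw [htop, mob_top])
    (fun x hx => ?_) x
  have hex : e x ≠ ⊤ := htop ▸ e.injective.ne hx
  calc ∑ y with x ≤ y, mob (e y)
      = ∑ y ∈ ({y | x ≤ y} : Finset α).map e.toEmbedding, mob y := (Finset.sum_map _ _ _).symm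
    _ = ∑ y with e x ≤ y, mob y := Finset.sum_subset (fun y hy => ?_) fun y hy hy' => ?_
    _ = 0 := sum_mob_le_eq_zero hex
  · obtain ⟨z, hz, rfl⟩ := Finset.mem_map.1 hy
    simpa using (Finset.mem_filter.1 hz).2
  · by_contra h
    obtain ⟨z, rfl⟩ := hsupp y h
    exact hy' (Finset.mem_map_of_mem _ (by simpa using (Finset.mem_filter.1 hy).2))

open Classical in
theorem mob_eq_zero_of_closure_ne [Finite α] (c : ClosureOperator α)
    (htop : ∀ x, c x = ⊤ → x = ⊤) {x : α} (hx : c x ≠ x) : mob x = 0 := by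
  have := Fintype.ofFinite α
  induction x using WellFoundedGT.induction with
  | _ x ih =>
  have hx_top : x ≠ ⊤ := by
    rintro rfl
    exact hx c.closure_top
  have hlt : x < c x := (c.le_closure x).lt_of_ne (Ne.symm hx)
  have hvanish : ∀ y, x < y → ¬ c.IsClosed y → mob y = 0 :=
    fun y hxy hy => ih y hxy (mt c.isClosed_iff.2 hy)
  have hgt : ∑ y with x < y, mob y = ∑ y with c x ≤ y, mob y := calc
    ∑ y with x < y, mob y = ∑ y with x < y ∧ c.IsClosed y, mob y := by
      rw [← Finset.filter_filter]
      refine (Finset.sum_filter_of_ne fun y hy h => ?_).symm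
      by_contra hy'
      exact h (hvanish y (Finset.mem_filter.1 hy).2 hy')
    _ = ∑ y with c x ≤ y ∧ c.IsClosed y, mob y := by
      refine Finset.sum_congr (Finset.filter_congr fun y _ => ?_) fun _ _ => rfl
      exact ⟨fun ⟨h, hy⟩ => ⟨c.closure_min h.le hy, hy⟩, fun ⟨h, hy⟩ => ⟨hlt.trans_le h, hy⟩⟩
    _ = ∑ y with c x ≤ y, mob y := by
      rw [← Finset.filter_filter]
      refine Finset.sum_filter_of_ne fun y hy h => ?_
      by_contra hy'
      exact h (hvanish y (hlt.trans_le (Finset.mem_filter.1 hy).2) hy')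
  have hsum := sum_mob_le_eq_zero hx_top
  rwa [sum_le_eq_add_sum_lt, hgt, sum_mob_le_eq_zero fun h => hx_top (htop x h), add_zero]
    at hsum

end Mobius

section CoatomClosure

variable (α : Type*) [CompleteLattice α]

def coatomClosure : ClosureOperator α :=
  ClosureOperator.mk₂ (fun x => sInf {m | IsCoatom m ∧ x ≤ m}) (fun _ => le_sInf fun _ hm => hm.2)
    fun _ _ hxy => sInf_le_sInf fun _ hm => ⟨hm.1, hxy.trans (sInf_le hm)⟩

variable {α}

theorem coatomClosure_apply (x : α) : coatomClosure α x = sInf {m | IsCoatom m ∧ x ≤ m} := rfl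

theorem eq_top_of_coatomClosure_eq_top [IsCoatomic α] {x : α} (h : coatomClosure α x = ⊤) :
    x = ⊤ := by
  by_contra hx
  obtain ⟨m, hm, hxm⟩ := (eq_top_or_exists_le_coatom x).resolve_left hx
  exact hm.1 (top_le_iff.1 (h ▸ sInf_le ⟨hm, hxm⟩))

theorem coatomClosure_map (e : α ≃o α) (x : α) :
    coatomClosure α (e x) = e (coatomClosure α x) := by
  rw [coatomClosure_apply, coatomClosure_apply, map_sInf, e.image_eq_preimage_symm]
  congr 1
  ext m
  simp only [Set.mem_ofPred_eq, Set.mem_preimage, e.symm.isCoatom_iff, e.le_symm_apply]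

end CoatomClosure

def ClosureOperator.antisymmetrization {α : Type*} [Preorder α] (c : ClosureOperator α) :
    ClosureOperator (Antisymmetrization α (· ≤ ·)) where
  toOrderHom := c.toOrderHom.antisymmetrization
  le_closure' x := by
    induction x using Antisymmetrization.ind with
    | _ x => exact toAntisymmetrization_le_toAntisymmetrization_iff.2 (c.le_closure x)
  idempotent' x := by
    induction x using Antisymmetrization.ind with
    | _ x => exact congrArg (toAntisymmetrization _) (c.idempotent x)

section ConjClasses

open Pointwise

variable {G : Type*} [Group G]

theorem CSub.le_iff {H K : CSub G} :
    H ≤ K ↔ ∃ g : G, H.toSubgroup ≤ MulAut.conj g • K.toSubgroup := Iff.rfl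

theorem conjClassOf_le_iff {H K : Subgroup G} :
    conjClassOf G H ≤ conjClassOf G K ↔ ∃ g : G, H ≤ MulAut.conj g • K :=
  toAntisymmetrization_le_toAntisymmetrization_iff

theorem conjClassOf_surjective : Function.Surjective (conjClassOf G) :=
  fun x => ⟨(ofAntisymmetrization _ x).toSubgroup, toAntisymmetrization_ofAntisymmetrization _ x⟩

theorem conjClassOf_eq_top_iff {H : Subgroup G} : conjClassOf G H = ⊤ ↔ H = ⊤ := by
  refine ⟨fun h => ?_, fun h => h ▸ rfl⟩
  obtain ⟨g, hg⟩ := conjClassOf_le_iff.1 h.ge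
  rw [← Subgroup.Normal.conj_smul_eq_self g ⊤, Subgroup.pointwise_smul_le_pointwise_smul_iff,
    top_le_iff] at hg
  exact hg

theorem Subgroup.conj_smul_eq_of_le_conj_smul [Finite G] {g : G} {H : Subgroup G}
    (h : H ≤ MulAut.conj g • H) : MulAut.conj g • H = H :=
  (Subgroup.eq_of_le_of_card_ge h (Nat.card_congr (equivSMul _ H).toEquiv).ge).symm

theorem coatomClosure_conj_smul (g : G) (H : Subgroup G) :
    coatomClosure _ (MulAut.conj g • H) = MulAut.conj g • coatomClosure _ H :=
  coatomClosure_map (MulAut.conj g).mapSubgroup H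

variable (G)

def conjCoatomClosure : ClosureOperator (CSub G) where
  toFun H := CSub.mk (coatomClosure _ H.toSubgroup)
  monotone' H K hHK := by
    obtain ⟨g, hg⟩ := CSub.le_iff.1 hHK
    refine CSub.le_iff.2 ⟨g, ?_⟩
    show coatomClosure _ H.toSubgroup ≤ MulAut.conj g • coatomClosure _ K.toSubgroup
    rw [← coatomClosure_conj_smul]
    exact (coatomClosure _).monotone hg
  le_closure' H := by
    refine CSub.le_iff.2 ⟨1, ?_⟩
    show H.toSubgroup ≤ MulAut.conj 1 • coatomClosure _ H.toSubgroup
    rw [map_one, one_smul]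
    exact (coatomClosure _).le_closure H.toSubgroup
  idempotent' H := congrArg CSub.mk ((coatomClosure _).idempotent H.toSubgroup)

def classCoatomClosure : ClosureOperator (ConjClassSub G) :=
  (conjCoatomClosure G).antisymmetrization

variable {G}

theorem classCoatomClosure_conjClassOf (H : Subgroup G) :
    classCoatomClosure G (conjClassOf G H) = conjClassOf G (coatomClosure _ H) := rfl

theorem eq_top_of_classCoatomClosure_eq_top [Finite G] {x : ConjClassSub G}
    (h : classCoatomClosure G x = ⊤) : x = ⊤ := by
  obtain ⟨H, rfl⟩ := conjClassOf_surjective x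
  rw [classCoatomClosure_conjClassOf, conjClassOf_eq_top_iff] at h
  rw [conjClassOf_eq_top_iff]
  exact eq_top_of_coatomClosure_eq_top h

theorem coatomClosure_eq_of_classCoatomClosure_eq [Finite G] {H : Subgroup G}
    (h : classCoatomClosure G (conjClassOf G H) = conjClassOf G H) : coatomClosure _ H = H := by
  rw [classCoatomClosure_conjClassOf] at h
  obtain ⟨g, hg⟩ := conjClassOf_le_iff.1 h.le
  have hgH := Subgroup.conj_smul_eq_of_le_conj_smul (((coatomClosure _).le_closure H).trans hg)
  exact le_antisymm (hg.trans hgH.le) ((coatomClosure _).le_closure H)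

end ConjClasses

namespace Subgroup

open Pointwise

variable {ι : Type*} {G : ι → Type*} [∀ i, Group (G i)]

theorem pi_le_pi_iff {K L : ∀ i, Subgroup (G i)} : pi Set.univ K ≤ pi Set.univ L ↔ K ≤ L := by
  rw [← SetLike.coe_subset_coe, coe_pi, coe_pi, Set.univ_pi_subset_univ_pi_iff,
    or_iff_left fun ⟨i, hi⟩ => Set.nonempty_iff_ne_empty.1 ⟨1, (K i).one_mem⟩ hi]
  exact Iff.rfl

variable (G) in
def piOrderEmbedding : (∀ i, Subgroup (G i)) ↪o Subgroup (∀ i, G i) :=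
  OrderEmbedding.ofMapLEIff (pi Set.univ) fun _ _ => pi_le_pi_iff

theorem pi_univ_injective : Function.Injective (pi Set.univ : (∀ i, Subgroup (G i)) → _) :=
  (piOrderEmbedding G).injective

theorem pi_inf_pi (A B : ∀ i, Subgroup (G i)) :
    pi Set.univ A ⊓ pi Set.univ B = pi Set.univ fun i => A i ⊓ B i := by
  ext x
  simp [mem_pi, forall_and]

theorem conj_smul_pi (g : ∀ i, G i) (K : ∀ i, Subgroup (G i)) :
    MulAut.conj g • pi Set.univ K = pi Set.univ fun i => MulAut.conj (g i) • K i := by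
  ext x
  simp [mem_pi, mem_pointwise_smul_iff_inv_smul_mem]

theorem normalizer_pi (K : ∀ i, Subgroup (G i)) :
    normalizer (pi Set.univ K : Set (∀ i, G i)) =
      pi Set.univ fun i => normalizer (K i : Set (G i)) := by
  ext g
  rw [mem_pi, mem_normalizer_iff_map_conj_eq]
  change MulAut.conj g • pi Set.univ K = pi Set.univ K ↔ _
  rw [conj_smul_pi, pi_univ_injective.eq_iff, funext_iff]
  simp only [Set.mem_univ, true_implies, mem_normalizer_iff_map_conj_eq]
  rfl

theorem card_pi [Fintype ι] (K : ∀ i, Subgroup (G i)) :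
    Nat.card (pi Set.univ K) = ∏ i, Nat.card (K i) := by
  rw [← Nat.card_pi]
  exact Nat.card_congr (Equiv.Set.univPi fun i => (K i : Set (G i)))

theorem card_inf_mul_relIndex {H : Type*} [Group H] (A B : Subgroup H) :
    Nat.card ↥(A ⊓ B) * A.relIndex B = Nat.card B := by
  rw [← inf_relIndex_right, ← relIndex_bot_left, relIndex_mul_relIndex _ _ _ bot_le inf_le_right,
    relIndex_bot_left]

theorem relIndex_pi [Fintype ι] [∀ i, Finite (G i)] (A B : ∀ i, Subgroup (G i)) :
    (pi Set.univ A).relIndex (pi Set.univ B) = ∏ i, (A i).relIndex (B i) := by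
  have hpos : 0 < ∏ i, Nat.card ↥(A i ⊓ B i) := Finset.prod_pos fun i _ => Nat.card_pos
  refine Nat.eq_of_mul_eq_mul_left hpos ?_
  calc (∏ i, Nat.card ↥(A i ⊓ B i)) * (pi Set.univ A).relIndex (pi Set.univ B)
      = ∏ i, Nat.card (B i) := by
        rw [← card_pi fun i => A i ⊓ B i, ← pi_inf_pi, card_inf_mul_relIndex, card_pi]
    _ = (∏ i, Nat.card ↥(A i ⊓ B i)) * ∏ i, (A i).relIndex (B i) := by
        rw [← Finset.prod_mul_distrib]
        exact Finset.prod_congr rfl fun i _ => (card_inf_mul_relIndex _ _).symm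

def IsPi (H : Subgroup (∀ i, G i)) : Prop := ∃ K : ∀ i, Subgroup (G i), H = pi Set.univ K

theorem isPi_sInf {S : Set (Subgroup (∀ i, G i))} (hS : ∀ H ∈ S, H.IsPi) : (sInf S).IsPi := by
  choose K hK using hS
  refine ⟨fun i => ⨅ H : S, K H H.2 i, ?_⟩
  ext x
  simp only [mem_sInf, mem_pi, mem_iInf, Set.mem_univ, true_implies, Subtype.forall]
  constructor
  · intro hx i H hH
    exact (hK H hH ▸ hx H hH : x ∈ pi Set.univ (K H hH)) i trivial
  · intro hx H hH
    rw [hK H hH]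
    exact fun i _ => hx i H hH

theorem isPi_coatomClosure (hmax : ∀ M : Subgroup (∀ i, G i), IsCoatom M → M.IsPi)
    (H : Subgroup (∀ i, G i)) : (coatomClosure _ H).IsPi :=
  isPi_sInf fun M hM => hmax M hM.1

end Subgroup

theorem commutator_pi {ι : Type*} [Finite ι] (G : ι → Type*) [∀ i, Group (G i)] :
    commutator (∀ i, G i) = Subgroup.pi Set.univ fun i => commutator (G i) := by
  rw [commutator_def, ← Subgroup.pi_top Set.univ, Subgroup.commutator_pi_pi_of_finite]
  rfl

section ConjClassPi

open Pointwise Subgroup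

variable {ι : Type*} {G : ι → Type*} [∀ i, Group (G i)]

theorem conjClassOf_pi_le_iff {A B : ∀ i, Subgroup (G i)} :
    conjClassOf _ (pi Set.univ A) ≤ conjClassOf _ (pi Set.univ B) ↔
      ∀ i, conjClassOf _ (A i) ≤ conjClassOf _ (B i) := by
  simp only [conjClassOf_le_iff, conj_smul_pi, pi_le_pi_iff, Pi.le_def]
  exact (Classical.skolem (p := fun i g => A i ≤ MulAut.conj g • B i)).symm

variable (G) in
noncomputable def conjClassPiEmbedding :
    (∀ i, ConjClassSub (G i)) ↪o ConjClassSub (∀ i, G i) :=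
  OrderEmbedding.ofMapLEIff
    (fun q => conjClassOf _ (pi Set.univ fun i => Function.surjInv conjClassOf_surjective (q i)))
    fun _ _ => by simp only [conjClassOf_pi_le_iff, Function.surjInv_eq, Pi.le_def]

theorem conjClassPiEmbedding_conjClassOf (K : ∀ i, Subgroup (G i)) :
    conjClassPiEmbedding G (fun i => conjClassOf _ (K i)) = conjClassOf _ (pi Set.univ K) :=
  le_antisymm (conjClassOf_pi_le_iff.2 fun _ => (Function.surjInv_eq _ _).le)
    (conjClassOf_pi_le_iff.2 fun _ => (Function.surjInv_eq _ _).ge)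

end ConjClassPi

section VanishingOffPi

open Subgroup

variable {ι : Type*} [Finite ι] {G : ι → Type*} [∀ i, Group (G i)] [∀ i, Finite (G i)]
  (hmax : ∀ M : Subgroup (∀ i, G i), IsCoatom M → M.IsPi)
include hmax

theorem muSub_eq_zero_of_not_isPi {H : Subgroup (∀ i, G i)} (hH : ¬ H.IsPi) : muSub H = 0 :=
  mob_eq_zero_of_closure_ne (coatomClosure _) (fun _ => eq_top_of_coatomClosure_eq_top)
    fun h => hH (h ▸ isPi_coatomClosure hmax H)

theorem lamSub_eq_zero_of_not_isPi {H : Subgroup (∀ i, G i)} (hH : ¬ H.IsPi) : lamSub H = 0 :=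
  mob_eq_zero_of_closure_ne (classCoatomClosure _) (fun _ => eq_top_of_classCoatomClosure_eq_top)
    fun h => hH (coatomClosure_eq_of_classCoatomClosure_eq h ▸ isPi_coatomClosure hmax H)

end VanishingOffPi

section MobiusOfPi

open Subgroup

variable {ι : Type*} [Fintype ι] {G : ι → Type*} [∀ i, Group (G i)] [∀ i, Finite (G i)]
  (hmax : ∀ M : Subgroup (∀ i, G i), IsCoatom M → M.IsPi)
include hmax

theorem muSub_pi (K : ∀ i, Subgroup (G i)) : muSub (pi Set.univ K) = ∏ i, muSub (K i) := by
  refine (mob_orderEmbedding (piOrderEmbedding G) (pi_top _) (fun H hH => ?_) K).trans (mob_pi K)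
  by_contra hrange
  exact hH (muSub_eq_zero_of_not_isPi hmax fun ⟨K, hK⟩ => hrange ⟨K, hK.symm⟩)

theorem lamSub_pi (K : ∀ i, Subgroup (G i)) : lamSub (pi Set.univ K) = ∏ i, lamSub (K i) := by
  have htop : conjClassPiEmbedding G ⊤ = ⊤ := by
    rw [show (⊤ : ∀ i, ConjClassSub (G i)) = fun i => conjClassOf _ ⊤ from rfl,
      conjClassPiEmbedding_conjClassOf, pi_top]
    rfl
  rw [lamSub, ← conjClassPiEmbedding_conjClassOf, mob_orderEmbedding _ htop (fun x hx => ?_),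
    mob_pi]
  · rfl
  obtain ⟨H, rfl⟩ := conjClassOf_surjective x
  by_contra hrange
  refine hx (lamSub_eq_zero_of_not_isPi hmax fun ⟨L, hL⟩ => ?_)
  exact hrange ⟨fun i => conjClassOf _ (L i), by rw [conjClassPiEmbedding_conjClassOf, hL]⟩

end MobiusOfPi

theorem muLambdaProperty_pi_general (n : ℕ) (G : Fin n → Type*) [∀ i, Group (G i)] [∀ i, Finite (G i)]
    (hmax : ∀ M : Subgroup (∀ i, G i), IsCoatom M →
      ∃ M' : ∀ i, Subgroup (G i), M = Subgroup.pi Set.univ M')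
    (hml : ∀ i, MuLambdaProperty (G i)) :
    MuLambdaProperty (∀ i, G i) := by
  intro H
  by_cases hH : H.IsPi
  · obtain ⟨K, rfl⟩ := hH
    rw [muSub_pi hmax, lamSub_pi hmax, commutator_pi, Subgroup.normalizer_pi, Subgroup.pi_inf_pi,
      Subgroup.pi_inf_pi, Subgroup.relIndex_pi, Nat.cast_prod, ← Finset.prod_mul_distrib]
    exact Finset.prod_congr rfl fun i _ => hml i (K i)
  · rw [muSub_eq_zero_of_not_isPi hmax hH, lamSub_eq_zero_of_not_isPi hmax hH, mul_zero]

/-- If every maximal subgroup of `G = ∏ Gᵢ` splits as a direct product and each `Gᵢ`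
satisfies the (μ,λ)-property, then so does `G`. -/
theorem muLambdaProperty_pi (n : ℕ) (hn : 2 ≤ n) (G : Fin n → Type*) [∀ i, Group (G i)] [∀ i, Finite (G i)]
    (hmax : ∀ M : Subgroup (∀ i, G i), IsCoatom M →
      ∃ M' : ∀ i, Subgroup (G i), M = Subgroup.pi Set.univ M')
    (hml : ∀ i, MuLambdaProperty (G i)) :
    MuLambdaProperty (∀ i, G i) :=
  muLambdaProperty_pi_general n G hmax hml
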